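/- Let P be a d-dimensional permutation matrix, and let t, u be positive integers with n = tu. Then |S_P(n)| ≤ t^{dn} · |T_P(u)|, where S_P(n) is the set of d-dimensional n-permutation matrices avoiding P and T_P(u) is the set of d-dimensional binary matrices of size u × ⋯ × u avoiding P. -/

import Mathlib

open Asymptotics

noncomputable section

/-- A `d`-dimensional binary matrix `P` of size `a × ⋯ × a` is contained in `A` of size
`n × ⋯ × n` if there are `d` strictly increasing maps sending 1-entries of `P` to 1-entries
of `A`. -/
def containsT {d a n : ℕ} (P : (Fin d → Fin a) → Bool) (A : (Fin d → Fin n) → Bool) : Prop :=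
  ∃ f : Fin d → (Fin a → Fin n), (∀ i, StrictMono (f i)) ∧
    ∀ x, P x = true → A (fun i => f i (x i)) = true

/-- `M` is a `d`-dimensional `n`-permutation matrix: its 1-entries are the positions
`(π 0 a, …, π (d-1) a)` for `a ∈ [n]`, where the `π i` are permutations of `[n]`. -/
def isPermTensor {d n : ℕ} (M : (Fin d → Fin n) → Bool) : Prop :=
  ∃ π : Fin d → Equiv.Perm (Fin n), ∀ x, (M x = true ↔ ∃ a, ∀ i, x i = π i a)

/-- `|S_P(n)|`: the number of `d`-dimensional `n`-permutation matrices avoiding `P`. -/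
def cardS {d a : ℕ} (P : (Fin d → Fin a) → Bool) (n : ℕ) : ℕ :=
  Nat.card {M : (Fin d → Fin n) → Bool // isPermTensor M ∧ ¬ containsT P M}

/-- `|T_P(u)|`: the number of `d`-dimensional binary matrices of size `u × ⋯ × u` avoiding `P`. -/
def cardT {d a : ℕ} (P : (Fin d → Fin a) → Bool) (u : ℕ) : ℕ :=
  Nat.card {M : (Fin d → Fin u) → Bool // ¬ containsT P M}

/-- `I^d_k`: the `d`-dimensional `k`-permutation matrix with 1-entries at `(i,…,i)`. -/
def diagT (d k : ℕ) : (Fin d → Fin k) → Bool :=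
  fun x => decide (∃ a : Fin k, ∀ i, x i = a)

/-! ### Auxiliary definitions for the blocking argument -/

/-- Contraction of `A` into `u^d` blocks of side `t`. -/
def contractM (t u : ℕ) {d n : ℕ} (A : (Fin d → Fin n) → Bool) : (Fin d → Fin u) → Bool :=
  fun q => decide (∃ x, A x = true ∧ ∀ i, (x i : ℕ) / t = (q i : ℕ))

lemma contractM_eq_true_iff {t u d n : ℕ} (A : (Fin d → Fin n) → Bool) (q : Fin d → Fin u) :
    contractM t u A q = true ↔ ∃ x, A x = true ∧ ∀ i, (x i : ℕ) / t = (q i : ℕ) := by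
  simp [contractM]

/-- The canonical points of a permutation tensor, indexed by their `i0`-th coordinate. -/
def thePt {d n : ℕ} (A : (Fin d → Fin n) → Bool) (hA : isPermTensor A) (i0 : Fin d) :
    Fin n → Fin d → Fin n :=
  fun b i => hA.choose i ((hA.choose i0).symm b)

lemma thePt_self {d n : ℕ} (A : (Fin d → Fin n) → Bool) (hA : isPermTensor A) (i0 : Fin d)
    (b : Fin n) : thePt A hA i0 b i0 = b :=
  Equiv.apply_symm_apply _ _

lemma thePt_mem {d n : ℕ} (A : (Fin d → Fin n) → Bool) (hA : isPermTensor A) (i0 : Fin d)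
    (b : Fin n) : A (thePt A hA i0 b) = true :=
  (hA.choose_spec _).2 ⟨(hA.choose i0).symm b, fun _ => rfl⟩

lemma eq_thePt_of_mem {d n : ℕ} (A : (Fin d → Fin n) → Bool) (hA : isPermTensor A) (i0 : Fin d)
    {x : Fin d → Fin n} (hx : A x = true) : x = thePt A hA i0 (x i0) := by
  obtain ⟨b, hb⟩ := (hA.choose_spec x).1 hx
  funext i
  show x i = hA.choose i ((hA.choose i0).symm (x i0))
  rw [hb i, hb i0, Equiv.symm_apply_apply]

lemma permT_coord_inj {d n : ℕ} {A : (Fin d → Fin n) → Bool} (hA : isPermTensor A) (i0 : Fin d)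
    {x y : Fin d → Fin n} (hx : A x = true) (hy : A y = true) (h : x i0 = y i0) : x = y := by
  rw [eq_thePt_of_mem A hA i0 hx, eq_thePt_of_mem A hA i0 hy, h]

/-- The contraction of an avoider avoids `P` (for `P` a permutation tensor). -/
lemma contract_avoid {d a t u n : ℕ} (P : (Fin d → Fin a) → Bool) (hP : isPermTensor P)
    (A : (Fin d → Fin n) → Bool) (hA : ¬ containsT P A) :
    ¬ containsT P (contractM t u A) := by
  rintro ⟨f, hf, hcont⟩
  obtain ⟨ρ, hρ⟩ := hP
  have hw : ∀ b : Fin a, ∃ x, A x = true ∧ ∀ i, (x i : ℕ) / t = ((f i (ρ i b)) : ℕ) := by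
    intro b
    have hPb : P (fun i => ρ i b) = true := (hρ _).2 ⟨b, fun i => rfl⟩
    exact (contractM_eq_true_iff A _).1 (hcont _ hPb)
  choose y hy1 hy2 using hw
  refine hA ⟨fun i c => y ((ρ i).symm c) i, ?_, ?_⟩
  · intro i c c' hcc
    have h1 : ((y ((ρ i).symm c) i : ℕ)) / t < ((y ((ρ i).symm c') i : ℕ)) / t := by
      rw [hy2, hy2, Equiv.apply_symm_apply, Equiv.apply_symm_apply]
      exact hf i hcc
    exact Fin.lt_def.2 (Nat.lt_of_div_lt_div h1)
  · intro x hx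
    obtain ⟨b, hb⟩ := (hρ x).1 hx
    have hxy : (fun i => y ((ρ i).symm (x i)) i) = y b := by
      funext i; rw [hb i, Equiv.symm_apply_apply]
    rw [hxy]; exact hy1 b

/-- An arbitrary injective numbering of `Fin d → Fin u`. -/
def ENCf (d u : ℕ) : (Fin d → Fin u) → ℕ :=
  fun Q => ((Fintype.equivFin (Fin d → Fin u)) Q : ℕ)

lemma ENCf_inj {d u : ℕ} : Function.Injective (ENCf d u) := fun _ _ h =>
  (Fintype.equivFin (Fin d → Fin u)).injective (Fin.val_injective h)

/-- The nonempty blocks of `B` in a given block-row. -/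
def rowSet {d u : ℕ} (B : (Fin d → Fin u) → Bool) (i0 : Fin d) (q : Fin u) :
    Finset (Fin d → Fin u) :=
  Finset.univ.filter fun Q => Q i0 = q ∧ B Q = true

/-- Rank of `Q` within a finite set, by the numbering `ENCf`. -/
def rankIn {d u : ℕ} (S : Finset (Fin d → Fin u)) (Q : Fin d → Fin u) : ℕ :=
  (S.filter fun R => ENCf d u R < ENCf d u Q).card

lemma rankIn_lt {d u : ℕ} {S : Finset (Fin d → Fin u)} {Q : Fin d → Fin u} (hQ : Q ∈ S) :
    rankIn S Q < S.card := by
  apply Finset.card_lt_card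
  rw [Finset.ssubset_iff_of_subset (Finset.filter_subset _ _)]
  exact ⟨Q, hQ, by simp⟩

lemma rankIn_strictMono {d u : ℕ} {S : Finset (Fin d → Fin u)} {Q R : Fin d → Fin u}
    (hQ : Q ∈ S) (h : ENCf d u Q < ENCf d u R) : rankIn S Q < rankIn S R := by
  apply Finset.card_lt_card
  have hsub : (S.filter fun X => ENCf d u X < ENCf d u Q) ⊆
      (S.filter fun X => ENCf d u X < ENCf d u R) := by
    intro x hx
    rw [Finset.mem_filter] at hx ⊢
    exact ⟨hx.1, lt_trans hx.2 h⟩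
  rw [Finset.ssubset_iff_of_subset hsub]
  exact ⟨Q, Finset.mem_filter.2 ⟨hQ, h⟩, by simp⟩

lemma rankIn_injOn {d u : ℕ} {S : Finset (Fin d → Fin u)} {Q R : Fin d → Fin u}
    (hQ : Q ∈ S) (hR : R ∈ S) (h : rankIn S Q = rankIn S R) : Q = R := by
  rcases lt_trichotomy (ENCf d u Q) (ENCf d u R) with hlt | heq | hgt
  · exact absurd h (Nat.ne_of_lt (rankIn_strictMono hQ hlt))
  · exact ENCf_inj heq
  · exact absurd h.symm (Nat.ne_of_lt (rankIn_strictMono hR hgt))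

/-- Each block-row of the contraction of a permutation tensor has at most `t` nonempty blocks. -/
lemma rowSet_card_le {d t u n : ℕ} (hn : n = t * u) {A : (Fin d → Fin n) → Bool}
    (hA : isPermTensor A) (i0 : Fin d) (q : Fin u) :
    (rowSet (contractM t u A) i0 q).card ≤ t := by
  classical
  have := Finset.card_le_card_of_injOn
    (f := fun R : Fin d → Fin u =>
      if h : ∃ x, A x = true ∧ ∀ i, (x i : ℕ) / t = (R i : ℕ) then
        ((h.choose i0 : ℕ) % t) else 0)
    (s := rowSet (contractM t u A) i0 q) (t := Finset.range t) ?_ ?_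
  · simpa using this
  · intro R hR
    rw [Finset.mem_coe, rowSet, Finset.mem_filter] at hR
    have h : ∃ x, A x = true ∧ ∀ i, (x i : ℕ) / t = (R i : ℕ) :=
      (contractM_eq_true_iff A R).1 hR.2.2
    simp only [dif_pos h, Finset.mem_coe, Finset.mem_range]
    have ht0 : 0 < t := by
      rcases Nat.eq_zero_or_pos t with h0 | h0
      · exact absurd (h.choose i0).2 (by simp [hn, h0])
      · exact h0
    exact Nat.mod_lt _ ht0
  · intro R1 hR1 R2 hR2 hf
    rw [Finset.mem_coe, rowSet, Finset.mem_filter] at hR1 hR2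
    have h1 : ∃ x, A x = true ∧ ∀ i, (x i : ℕ) / t = (R1 i : ℕ) :=
      (contractM_eq_true_iff A R1).1 hR1.2.2
    have h2 : ∃ x, A x = true ∧ ∀ i, (x i : ℕ) / t = (R2 i : ℕ) :=
      (contractM_eq_true_iff A R2).1 hR2.2.2
    simp only [dif_pos h1, dif_pos h2] at hf
    have hdiv : ((h1.choose i0 : ℕ)) / t = ((h2.choose i0 : ℕ)) / t := by
      rw [h1.choose_spec.2 i0, h2.choose_spec.2 i0, hR1.2.1, hR2.2.1]
    have hmod : (h1.choose i0 : ℕ) % t = (h2.choose i0 : ℕ) % t := hf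
    have hval : (h1.choose i0 : ℕ) = (h2.choose i0 : ℕ) := by
      conv_lhs => rw [← Nat.div_add_mod (h1.choose i0 : ℕ) t]
      conv_rhs => rw [← Nat.div_add_mod (h2.choose i0 : ℕ) t]
      rw [hdiv, hmod]
    have hxy : h1.choose = h2.choose :=
      permT_coord_inj hA i0 h1.choose_spec.1 h2.choose_spec.1 (Fin.ext hval)
    funext i
    exact Fin.ext (by rw [← h1.choose_spec.2 i, ← h2.choose_spec.2 i, hxy])

/-- Block coordinate of an entry. -/
def blkF {t u n : ℕ} (ht : 1 ≤ t) (hn : n = t * u) (x : Fin n) : Fin u :=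
  ⟨(x : ℕ) / t, Nat.div_lt_of_lt_mul (hn ▸ x.2)⟩

/-- The block vector of the `b`-th point of a permutation tensor. -/
def QvF {d t u n : ℕ} (ht : 1 ≤ t) (hn : n = t * u) (A : (Fin d → Fin n) → Bool)
    (hA : isPermTensor A) (i0 : Fin d) (b : Fin n) : Fin d → Fin u :=
  fun i => blkF ht hn (thePt A hA i0 b i)

lemma QvF_mem {d t u n : ℕ} (ht : 1 ≤ t) (hn : n = t * u) (A : (Fin d → Fin n) → Bool)
    (hA : isPermTensor A) (i0 : Fin d) (b : Fin n) :
    QvF ht hn A hA i0 b ∈ rowSet (contractM t u A) i0 (blkF ht hn b) := by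
  rw [rowSet, Finset.mem_filter]
  refine ⟨Finset.mem_univ _, ?_, ?_⟩
  · show blkF ht hn (thePt A hA i0 b i0) = blkF ht hn b
    rw [thePt_self]
  · exact (contractM_eq_true_iff A _).2 ⟨thePt A hA i0 b, thePt_mem A hA i0 b, fun i => rfl⟩

/-- The per-point encoding: rank of the block within its block-row at coordinate `i0`,
residues elsewhere. -/
def encodeF {d t u n : ℕ} (ht : 1 ≤ t) (hn : n = t * u) (i0 : Fin d)
    (A : (Fin d → Fin n) → Bool) (hA : isPermTensor A) : Fin n → Fin d → Fin t :=
  fun b i =>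
    ⟨(if i = i0 then
        rankIn (rowSet (contractM t u A) i0 (blkF ht hn b)) (QvF ht hn A hA i0 b)
      else (thePt A hA i0 b i : ℕ)) % t, Nat.mod_lt _ ht⟩

lemma encodeF_injective {d t u n : ℕ} (ht : 1 ≤ t) (hn : n = t * u) (i0 : Fin d)
    {A A' : (Fin d → Fin n) → Bool} (hA : isPermTensor A) (hA' : isPermTensor A')
    (hB : contractM t u A = contractM t u A')
    (hE : encodeF ht hn i0 A hA = encodeF ht hn i0 A' hA') : A = A' := by
  have hpt : thePt A hA i0 = thePt A' hA' i0 := by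
    funext b
    -- ranks agree, hence block vectors agree
    have hQmem := QvF_mem ht hn A hA i0 b
    have hQmem' := QvF_mem ht hn A' hA' i0 b
    rw [← hB] at hQmem'
    have hrank1 : rankIn (rowSet (contractM t u A) i0 (blkF ht hn b)) (QvF ht hn A hA i0 b) < t :=
      lt_of_lt_of_le (rankIn_lt hQmem) (rowSet_card_le hn hA i0 _)
    have hrank2 : rankIn (rowSet (contractM t u A) i0 (blkF ht hn b))
        (QvF ht hn A' hA' i0 b) < t :=
      lt_of_lt_of_le (rankIn_lt hQmem') (rowSet_card_le hn hA i0 _)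
    have he0 := congrFun (congrFun hE b) i0
    rw [Fin.ext_iff] at he0
    simp only [encodeF, eq_self_iff_true, if_true] at he0
    rw [← hB] at he0
    rw [Nat.mod_eq_of_lt hrank1, Nat.mod_eq_of_lt hrank2] at he0
    have hQ : QvF ht hn A hA i0 b = QvF ht hn A' hA' i0 b :=
      rankIn_injOn hQmem hQmem' he0
    funext i
    by_cases hi : i = i0
    · rw [hi, thePt_self, thePt_self]
    · have hei := congrFun (congrFun hE b) i
      rw [Fin.ext_iff] at hei
      simp only [encodeF, if_neg hi] at hei
      have hmod : (thePt A hA i0 b i : ℕ) % t = (thePt A' hA' i0 b i : ℕ) % t := hei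
      have hdiv : (thePt A hA i0 b i : ℕ) / t = (thePt A' hA' i0 b i : ℕ) / t := by
        have h := congrFun hQ i
        simpa [QvF, blkF, Fin.ext_iff] using h
      refine Fin.ext ?_
      conv_lhs => rw [← Nat.div_add_mod (thePt A hA i0 b i : ℕ) t]
      conv_rhs => rw [← Nat.div_add_mod (thePt A' hA' i0 b i : ℕ) t]
      rw [hdiv, hmod]
  funext x
  have h1 : A x = true ↔ ∃ b, x = thePt A hA i0 b :=
    ⟨fun hx => ⟨x i0, eq_thePt_of_mem A hA i0 hx⟩, fun ⟨b, hb⟩ => hb ▸ thePt_mem A hA i0 b⟩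
  have h2 : A' x = true ↔ ∃ b, x = thePt A' hA' i0 b :=
    ⟨fun hx => ⟨x i0, eq_thePt_of_mem A' hA' i0 hx⟩, fun ⟨b, hb⟩ => hb ▸ thePt_mem A' hA' i0 b⟩
  rw [hpt] at h1
  exact Bool.eq_iff_iff.2 (h1.trans h2.symm)

/-- `|S_P(n)| ≤ t^(dn) · |T_P(u)|` whenever `n = tu`. -/
theorem stmt10 (d a t u n : ℕ) (hd : 1 ≤ d) (ht : 1 ≤ t) (hu : 1 ≤ u)
    (hn : n = t * u) (P : (Fin d → Fin a) → Bool) (hP : isPermTensor P) :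
    cardS P n ≤ t ^ (d * n) * cardT P u := by
  classical
  let i0 : Fin d := ⟨0, hd⟩
  let Φ : {M : (Fin d → Fin n) → Bool // isPermTensor M ∧ ¬ containsT P M} →
      ({B : (Fin d → Fin u) → Bool // ¬ containsT P B} × (Fin n → Fin d → Fin t)) :=
    fun M => (⟨contractM t u M.1, contract_avoid P hP M.1 M.2.2⟩,
              encodeF ht hn i0 M.1 M.2.1)
  have hΦ : Function.Injective Φ := by
    intro M M' h
    have h1 : contractM t u M.1 = contractM t u M'.1 :=
      congrArg (fun p => (Prod.fst p).1) h
    have h2 : encodeF ht hn i0 M.1 M.2.1 = encodeF ht hn i0 M'.1 M'.2.1 :=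
      congrArg Prod.snd h
    exact Subtype.ext (encodeF_injective ht hn i0 M.2.1 M'.2.1 h1 h2)
  have hcard := Nat.card_le_card_of_injective Φ hΦ
  rw [Nat.card_prod] at hcard
  have hE : Nat.card (Fin n → Fin d → Fin t) = t ^ (d * n) := by
    rw [Nat.card_eq_fintype_card]
    simp [Fintype.card_fun, ← pow_mul, mul_comm d n]
  calc cardS P n ≤ Nat.card {B : (Fin d → Fin u) → Bool // ¬ containsT P B} *
        Nat.card (Fin n → Fin d → Fin t) := hcard
    _ = t ^ (d * n) * cardT P u := by rw [hE, cardT, mul_comm]
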